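/- Let R be a ring and let J be an injective cogenerator of the category of left R-modules. A morphism q : X ⟶ Y of chain complexes of left R-modules is a quasi-isomorphism if and only if the induced morphism of cochain complexes q* : Hom_R(Y, J) ⟶ Hom_R(X, J) is a quasi-isomorphism. -/

import Mathlib

/-!
`Hom_R(-, J)` is the preadditive Yoneda functor of `J`, a functor `(ModuleCat R)ᵒᵖ ⥤ Ab`,
applied degreewise to the opposite complex. Injectivity of `J` makes it exact, so it commutes
with homology; the cogenerator property makes it faithful, and an exact faithful functor between
abelian categories reflects isomorphisms. Hence `q*` is a quasi-isomorphism iff `qᵒᵖ` is, iff `q`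
is.
-/

open CategoryTheory

universe u

variable {R : Type u} [Ring R]

/-- Precomposition with a morphism of `R`-modules, as a morphism of abelian groups
between the `Hom`-groups with values in an `R`-module `M`. -/
def precompHom {A B : ModuleCat.{u} R} (f : A ⟶ B) (M : ModuleCat.{u} R) :
    AddCommGrpCat.of (B →ₗ[R] M) ⟶ AddCommGrpCat.of (A →ₗ[R] M) :=
  AddCommGrpCat.ofHom
    { toFun := fun φ => φ.comp f.hom
      map_zero' := LinearMap.zero_comp f.hom
      map_add' := fun φ ψ => LinearMap.add_comp f.hom ψ φ }

lemma precompHom_zero {A B : ModuleCat.{u} R} (M : ModuleCat.{u} R) :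
    precompHom (0 : A ⟶ B) M = 0 := by
  ext φ
  first
  | simp [precompHom]
  | exact LinearMap.comp_zero (φ : B →ₗ[R] M)
  | rfl

lemma precompHom_comp {A B C : ModuleCat.{u} R} (f : A ⟶ B) (g : B ⟶ C)
    (M : ModuleCat.{u} R) :
    precompHom (f ≫ g) M = precompHom g M ≫ precompHom f M := by
  ext φ
  rfl

/-- The Hom complex `Hom_R(X, M)` of a chain complex `X` of `R`-modules with values in an
`R`-module `M`: the cochain complex of abelian groups whose degree `n` component is
`Hom_R(X_n, M)`, with differentials given by precomposition with the differentials of `X`. -/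
noncomputable def homComplex (X : ChainComplex (ModuleCat.{u} R) ℤ) (M : ModuleCat.{u} R) :
    CochainComplex AddCommGrpCat.{u} ℤ where
  X n := AddCommGrpCat.of (X.X n →ₗ[R] M)
  d n m := precompHom (X.d m n) M
  shape n m h := by
    rw [X.shape m n h, precompHom_zero]
  d_comp_d' i j l _ _ := by
    rw [← precompHom_comp, X.d_comp_d, precompHom_zero]

/-- The morphism of Hom complexes `Hom_R(Y, M) ⟶ Hom_R(X, M)` induced by precomposition with a
morphism of chain complexes `q : X ⟶ Y`. -/
noncomputable def homComplexMap {X Y : ChainComplex (ModuleCat.{u} R) ℤ} (q : X ⟶ Y)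
    (M : ModuleCat.{u} R) : homComplex Y M ⟶ homComplex X M where
  f n := precompHom (q.f n) M
  comm' n m _ := by
    dsimp [homComplex]
    rw [← precompHom_comp, ← precompHom_comp, q.comm]

/-- `(ComplexShape.down ℤ).symm` is definitionally `ComplexShape.up ℤ`, so this is an
isomorphism of cochain complexes. -/
noncomputable def homComplexIsoPreadditiveYoneda (X : ChainComplex (ModuleCat.{u} R) ℤ)
    (M : ModuleCat.{u} R) :
    homComplex X M ≅
      ((preadditiveYoneda.obj M).mapHomologicalComplex (ComplexShape.down ℤ).symm).obj
        ((HomologicalComplex.opFunctor _ _).obj (Opposite.op X)) :=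
  HomologicalComplex.Hom.isoOfComponents
    (fun n => (ModuleCat.homAddEquiv (M := X.X n) (N := M)).symm.toAddCommGrpIso)
    (by intros; ext; rfl)

noncomputable def homComplexMapArrowIsoPreadditiveYoneda {X Y : ChainComplex (ModuleCat.{u} R) ℤ}
    (q : X ⟶ Y) (M : ModuleCat.{u} R) :
    Arrow.mk (homComplexMap q M) ≅
      Arrow.mk (((preadditiveYoneda.obj M).mapHomologicalComplex (ComplexShape.down ℤ).symm).map
        ((HomologicalComplex.opFunctor _ _).map q.op)) :=
  Arrow.isoMk (homComplexIsoPreadditiveYoneda Y M) (homComplexIsoPreadditiveYoneda X M)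
    (by ext; rfl)

instance preservesHomology_preadditiveYoneda_obj_of_injective (J : ModuleCat.{u} R)
    [Injective J] : (preadditiveYoneda.obj J).PreservesHomology :=
  have := (Injective.injective_iff_preservesEpimorphisms_preadditiveYoneda_obj J).mp ‹_›
  Functor.preservesHomology_of_preservesEpis_and_kernels _

lemma ModuleCat.isCoseparator_of_exists_apply_ne_zero (J : Type u) [AddCommGroup J] [Module R J]
    (hJ : ∀ (M : Type u) [AddCommGroup M] [Module R M] (m : M), m ≠ 0 →
      ∃ φ : M →ₗ[R] J, φ m ≠ 0) :
    IsCoseparator (ModuleCat.of R J) := by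
  refine (Preadditive.isCoseparator_iff _).2 fun A B f hf => ?_
  ext a
  by_contra hfa
  obtain ⟨φ, hφ⟩ := hJ B (f a) hfa
  exact hφ congr(($(hf (ModuleCat.ofHom φ))).hom a)

theorem quasiIso_homComplexMap_iff {J : ModuleCat.{u} R} [Injective J] (hJ : IsCoseparator J)
    {X Y : ChainComplex (ModuleCat.{u} R) ℤ} (q : X ⟶ Y) :
    QuasiIso (homComplexMap q J) ↔ QuasiIso q := by
  have := (isCoseparator_iff_faithful_preadditiveYoneda J).1 hJ
  exact (quasiIso_iff_of_arrow_mk_iso _ _ (homComplexMapArrowIsoPreadditiveYoneda q J)).trans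
    ((HomologicalComplex.quasiIso_map_iff_of_preservesHomology _ _).trans
      (HomologicalComplex.quasiIso_opFunctor_map_iff q))

/-- If `J` is an injective cogenerator of the category of left `R`-modules, then a morphism
`q : X ⟶ Y` of chain complexes of left `R`-modules is a quasi-isomorphism if and only if the
induced morphism of cochain complexes `Hom_R(Y, J) ⟶ Hom_R(X, J)` is a quasi-isomorphism. -/
theorem statement3 {R : Type} [Ring R] (J : Type) [AddCommGroup J] [Module R J]
    (hJinj : Module.Injective R J)
    (hJcog : ∀ (M : Type) [AddCommGroup M] [Module R M] (m : M), m ≠ 0 →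
      ∃ φ : M →ₗ[R] J, φ m ≠ 0)
    {X Y : ChainComplex (ModuleCat.{0} R) ℤ} (q : X ⟶ Y) :
    QuasiIso q ↔ QuasiIso (homComplexMap q (ModuleCat.of R J)) := by
  have := (Module.injective_iff_injective_object R J).1 hJinj
  exact (quasiIso_homComplexMap_iff
    (ModuleCat.isCoseparator_of_exists_apply_ne_zero J hJcog) q).symm
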